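/- If in addition K₁ is positive semidefinite and η₂ > 0 (so that M is positive semidefinite and all λᵢ ≥ 0), then ‖K₁ − H₁Λ₁H₁ᵀ‖²_F ≤ Σ_{i=s₁+1}^{N} λᵢ² − (1/η₂ − 2·s₁·Σ_{i=1}^{s₁} λᵢ)·(s₂/η₂). -/

import Mathlib

open Matrix Finset

/-- Frobenius norm of a real matrix: `‖A‖_F = sqrt(trace(AᵀA))`. -/
noncomputable def frobNorm {m n : ℕ} (A : Matrix (Fin m) (Fin n) ℝ) : ℝ :=
  Real.sqrt ((Aᵀ * A).trace)

/-! Write `Q = H₂H₂ᵀ` (an orthogonal projection of trace `s₂`) and `P = H₁Λ₁H₁ᵀ`, so that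
`K₁ - P = M - Q/η₂ - P`. Expanding the squared Frobenius norm and using `MP = P²`,
`tr M² = Σ λᵢ²`, `tr P² = Σ_{i ≤ s₁} λᵢ²` gives
`‖K₁ - P‖² = Σ_{i > s₁} λᵢ² - s₂/η₂² - (2/η₂) tr(K₁Q) + (2/η₂) tr(PQ)`.
Finally `tr(K₁Q) ≥ 0` since `K₁` is positive semidefinite, and `tr(PQ) ≤ Σ_{i ≤ s₁} λᵢ` because
the diagonal entries of `H₁ᵀQH₁` are at most `1`; the stated bound only weakens this last
estimate by the factor `s₁s₂ ≥ 1`. -/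

theorem frobNorm_sq {m n : ℕ} (A : Matrix (Fin m) (Fin n) ℝ) :
    frobNorm A ^ 2 = (Aᵀ * A).trace := by
  refine Real.sq_sqrt ?_
  simpa only [conjTranspose_eq_transpose_of_trivial] using
    (posSemidef_conjTranspose_mul_self A).trace_nonneg

theorem Fin.sum_filter_lt_eq_sum_castLE {M : Type*} [AddCommMonoid M] {s N : ℕ} (h : s ≤ N)
    (f : Fin N → M) :
    ∑ i ∈ univ.filter (fun i : Fin N => (i : ℕ) < s), f i = ∑ i : Fin s, f (Fin.castLE h i) := by
  have hfilter : univ.filter (fun i : Fin N => (i : ℕ) < s) = univ.map (Fin.castLEEmb h) := by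
    ext i
    simp only [mem_filter, mem_univ, true_and, mem_map, Fin.castLEEmb_apply]
    exact ⟨fun hi => ⟨⟨i, hi⟩, rfl⟩, by rintro ⟨j, rfl⟩; exact j.2⟩
  rw [hfilter, sum_map]
  rfl

theorem Fin.sum_filter_le_eq_sum_sub_sum_castLE {G : Type*} [AddCommGroup G] {s N : ℕ}
    (h : s ≤ N) (f : Fin N → G) :
    ∑ i ∈ univ.filter (fun i : Fin N => s ≤ (i : ℕ)), f i
      = ∑ i, f i - ∑ i : Fin s, f (Fin.castLE h i) := by
  rw [← Fin.sum_filter_lt_eq_sum_castLE h, eq_sub_iff_add_eq, add_comm]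
  simpa only [not_lt] using sum_filter_add_sum_filter_not univ (fun i : Fin N => (i : ℕ) < s) f

namespace Matrix

variable {m n k R : Type*} [Fintype m] [Fintype n] [Fintype k]

section CommRing

variable [CommRing R]

theorem trace_sub_smul_sub_mul_self (A Q P : Matrix n n R) (c : R) :
    ((A - c • Q - P) * (A - c • Q - P)).trace
      = (A * A).trace - 2 * c * (A * Q).trace - 2 * (A * P).trace
        + c ^ 2 * (Q * Q).trace + 2 * c * (P * Q).trace + (P * P).trace := by
  simp only [sub_mul, mul_sub, Matrix.smul_mul, Matrix.mul_smul, trace_sub, trace_smul,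
    smul_eq_mul]
  rw [trace_mul_comm Q A, trace_mul_comm P A, trace_mul_comm Q P]
  ring

variable [DecidableEq n]

theorem trace_diagonal_mul_diagonal (d : n → R) :
    (diagonal d * diagonal d).trace = ∑ i, d i ^ 2 := by
  simp only [diagonal_mul_diagonal, trace_diagonal, sq]

variable {H : Matrix m n R}

theorem isIdempotentElem_mul_transpose (hH : Hᵀ * H = 1) : IsIdempotentElem (H * Hᵀ) := by
  rw [IsIdempotentElem, Matrix.mul_assoc, ← Matrix.mul_assoc Hᵀ, hH, Matrix.one_mul]

theorem trace_mul_transpose (hH : Hᵀ * H = 1) : (H * Hᵀ).trace = Fintype.card n := by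
  rw [trace_mul_comm, hH, trace_one]

theorem trace_conj_mul_conj (hH : Hᵀ * H = 1) (A B : Matrix n n R) :
    (H * A * Hᵀ * (H * B * Hᵀ)).trace = (A * B).trace := by
  have hcancel : H * A * Hᵀ * (H * B * Hᵀ) = H * (A * B * Hᵀ) := by
    simp only [Matrix.mul_assoc]
    rw [← Matrix.mul_assoc Hᵀ H, hH, Matrix.one_mul]
  rw [hcancel, trace_mul_comm, Matrix.mul_assoc, hH, Matrix.mul_one]

theorem mul_conj_eq_conj_mul_conj [DecidableEq m] {M : Matrix m m R} {Λ : Matrix n n R}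
    (hH : Hᵀ * H = 1) (hMH : M * H = H * Λ) :
    M * (H * Λ * Hᵀ) = H * Λ * Hᵀ * (H * Λ * Hᵀ) := by
  simp only [← Matrix.mul_assoc, hMH]
  simp only [Matrix.mul_assoc]
  rw [← Matrix.mul_assoc Hᵀ H, hH, Matrix.one_mul]

end CommRing

theorem PosSemidef.trace_mul_mul_transpose_nonneg {A : Matrix m m ℝ} (hA : A.PosSemidef)
    (G : Matrix m k ℝ) : 0 ≤ (A * (G * Gᵀ)).trace := by
  rw [← Matrix.mul_assoc, trace_mul_comm, ← Matrix.mul_assoc]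
  simpa only [conjTranspose_eq_transpose_of_trivial] using
    (hA.conjTranspose_mul_mul_same G).trace_nonneg

variable [DecidableEq n] [DecidableEq m] [DecidableEq k] {H : Matrix m n ℝ} {G : Matrix m k ℝ}

theorem transpose_mul_mul_transpose_mul_apply_le_one (hH : Hᵀ * H = 1) (hG : Gᵀ * G = 1)
    (i : n) : (Hᵀ * (G * Gᵀ) * H) i i ≤ 1 := by
  have hproj : (1 - G * Gᵀ)ᵀ * (1 - G * Gᵀ) = 1 - G * Gᵀ := by
    rw [transpose_sub, transpose_one, transpose_mul, transpose_transpose, sub_mul,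
      one_mul, mul_sub, mul_one, (isIdempotentElem_mul_transpose hG).eq, sub_self, sub_zero]
  have hpsd : (Hᵀ * (1 - G * Gᵀ) * H).PosSemidef := by
    have := (posSemidef_conjTranspose_mul_self (1 - G * Gᵀ)).conjTranspose_mul_mul_same H
    simpa only [conjTranspose_eq_transpose_of_trivial, hproj] using this
  have := hpsd.diag_nonneg (i := i)
  rw [Matrix.mul_sub, Matrix.mul_one, Matrix.sub_mul, hH, sub_apply, one_apply_eq] at this
  linarith

theorem trace_conj_diagonal_mul_le (hH : Hᵀ * H = 1) (hG : Gᵀ * G = 1) {d : n → ℝ}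
    (hd : ∀ i, 0 ≤ d i) : (H * diagonal d * Hᵀ * (G * Gᵀ)).trace ≤ ∑ i, d i := by
  rw [show H * diagonal d * Hᵀ * (G * Gᵀ) = H * (diagonal d * (Hᵀ * (G * Gᵀ))) by
    simp only [Matrix.mul_assoc], trace_mul_comm, Matrix.mul_assoc, trace]
  refine Finset.sum_le_sum fun i _ => ?_
  rw [diag_apply, diagonal_mul]
  exact mul_le_of_le_one_right (hd i) (transpose_mul_mul_transpose_mul_apply_le_one hH hG i)

end Matrix

theorem dkpca_approximation_upper_bound_pos_general
    (N s₁ s₂ : ℕ) (hs₁pos : 0 < s₁) (hs₂pos : 0 < s₂) (hs₁N : s₁ ≤ N)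
    (η₂ : ℝ) (hη₂ : 0 < η₂)
    (K₁ : Matrix (Fin N) (Fin N) ℝ) (hK₁ : K₁.IsSymm) (hK₁psd : K₁.PosSemidef)
    (H₂ : Matrix (Fin N) (Fin s₂) ℝ) (hH₂ : H₂ᵀ * H₂ = 1)
    (M : Matrix (Fin N) (Fin N) ℝ) (hM : M = K₁ + (1 / η₂) • (H₂ * H₂ᵀ))
    -- λ₁ ≥ … ≥ λ_N : the eigenvalues of M in decreasing order with multiplicity
    (lam : Fin N → ℝ) (hlamnonneg : ∀ i, 0 ≤ lam i)
    (U : Matrix (Fin N) (Fin N) ℝ) (hU : Uᵀ * U = 1)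
    (hMU : M = U * Matrix.diagonal lam * Uᵀ)
    -- Λ₁ = diag(λ₁,…,λ_{s₁}), H₁ with orthonormal columns, M H₁ = H₁ Λ₁
    (Λ₁ : Matrix (Fin s₁) (Fin s₁) ℝ)
    (hΛ₁ : Λ₁ = Matrix.diagonal fun i : Fin s₁ => lam (Fin.castLE hs₁N i))
    (H₁ : Matrix (Fin N) (Fin s₁) ℝ) (hH₁ : H₁ᵀ * H₁ = 1)
    (hMH₁ : M * H₁ = H₁ * Λ₁) :
    (frobNorm (K₁ - H₁ * Λ₁ * H₁ᵀ)) ^ 2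
      ≤ (∑ i ∈ Finset.univ.filter (fun i : Fin N => s₁ ≤ (i : ℕ)), (lam i) ^ 2)
        - (1 / η₂
            - 2 * (s₁ : ℝ) * ∑ i ∈ Finset.univ.filter (fun i : Fin N => (i : ℕ) < s₁), lam i)
          * ((s₂ : ℝ) / η₂) := by
  subst hΛ₁
  set Q := H₂ * H₂ᵀ
  set P := H₁ * diagonal (fun i => lam (Fin.castLE hs₁N i)) * H₁ᵀ
  have hP : Pᵀ = P := by
    simp only [P, transpose_mul, transpose_transpose, diagonal_transpose, Matrix.mul_assoc]
  have hMM : (M * M).trace = ∑ i, lam i ^ 2 := by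
    rw [hMU, trace_conj_mul_conj hU, trace_diagonal_mul_diagonal]
  have hPP : (P * P).trace = ∑ i : Fin s₁, lam (Fin.castLE hs₁N i) ^ 2 := by
    rw [trace_conj_mul_conj hH₁, trace_diagonal_mul_diagonal]
  have hQQ : Q * Q = Q := (isIdempotentElem_mul_transpose hH₂).eq
  have hQ : Q.trace = s₂ := by rw [trace_mul_transpose hH₂, Fintype.card_fin]
  have hMQ : (M * Q).trace = (K₁ * Q).trace + 1 / η₂ * s₂ := by
    rw [hM, add_mul, Matrix.smul_mul, hQQ, trace_add, trace_smul, hQ, smul_eq_mul]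
  have hKQ : 0 ≤ (K₁ * Q).trace := hK₁psd.trace_mul_mul_transpose_nonneg H₂
  have hPQ : (P * Q).trace ≤ ∑ i : Fin s₁, lam (Fin.castLE hs₁N i) :=
    trace_conj_diagonal_mul_le hH₁ hH₂ fun i => hlamnonneg _
  have hS : 0 ≤ ∑ i : Fin s₁, lam (Fin.castLE hs₁N i) := sum_nonneg fun i _ => hlamnonneg _
  have hs : (1 : ℝ) ≤ s₁ * s₂ := by exact_mod_cast Nat.mul_pos hs₁pos hs₂pos
  have hdiff : K₁ - P = M - (1 / η₂) • Q - P := by rw [hM]; abel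
  have hc : 0 < 1 / η₂ := by positivity
  rw [frobNorm_sq, transpose_sub, hK₁.eq, hP, hdiff, trace_sub_smul_sub_mul_self,
    mul_conj_eq_conj_mul_conj hH₁ hMH₁, hMM, hPP, hQQ, hQ, hMQ,
    Fin.sum_filter_lt_eq_sum_castLE hs₁N, Fin.sum_filter_le_eq_sum_sub_sum_castLE hs₁N,
    div_eq_mul_one_div (s₂ : ℝ) η₂]
  linarith [mul_le_mul_of_nonneg_left hPQ hc.le, mul_nonneg hc.le hKQ,
    mul_nonneg (mul_nonneg hc.le hS) (sub_nonneg.mpr hs)]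

/-- Upper bound for the deep approximation error of `K₁` when `η₂ > 0`:
`‖K₁ − H₁Λ₁H₁ᵀ‖²_F ≤ Σ_{i=s₁+1}^{N} λᵢ² − (1/η₂ − 2·s₁·Σ_{i=1}^{s₁} λᵢ)·(s₂/η₂)`. -/
theorem dkpca_approximation_upper_bound_pos
    (N s₁ s₂ : ℕ) (hNpos : 0 < N) (hs₁pos : 0 < s₁) (hs₂pos : 0 < s₂) (hs₁N : s₁ ≤ N)
    (η₂ : ℝ) (hη₂ : 0 < η₂)
    (K₁ : Matrix (Fin N) (Fin N) ℝ) (hK₁ : K₁.IsSymm) (hK₁psd : K₁.PosSemidef)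
    (H₂ : Matrix (Fin N) (Fin s₂) ℝ) (hH₂ : H₂ᵀ * H₂ = 1)
    (M : Matrix (Fin N) (Fin N) ℝ) (hM : M = K₁ + (1 / η₂) • (H₂ * H₂ᵀ))
    -- (so that M is positive semidefinite and all λᵢ ≥ 0)
    (hMpsd : M.PosSemidef)
    -- λ₁ ≥ … ≥ λ_N : the eigenvalues of M in decreasing order with multiplicity
    (lam : Fin N → ℝ) (hlam : Antitone lam) (hlamnonneg : ∀ i, 0 ≤ lam i)
    (U : Matrix (Fin N) (Fin N) ℝ) (hU : Uᵀ * U = 1)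
    (hMU : M = U * Matrix.diagonal lam * Uᵀ)
    -- Λ₁ = diag(λ₁,…,λ_{s₁}), H₁ with orthonormal columns, M H₁ = H₁ Λ₁
    (Λ₁ : Matrix (Fin s₁) (Fin s₁) ℝ)
    (hΛ₁ : Λ₁ = Matrix.diagonal fun i : Fin s₁ => lam (Fin.castLE hs₁N i))
    (H₁ : Matrix (Fin N) (Fin s₁) ℝ) (hH₁ : H₁ᵀ * H₁ = 1)
    (hMH₁ : M * H₁ = H₁ * Λ₁) :
    (frobNorm (K₁ - H₁ * Λ₁ * H₁ᵀ)) ^ 2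
      ≤ (∑ i ∈ Finset.univ.filter (fun i : Fin N => s₁ ≤ (i : ℕ)), (lam i) ^ 2)
        - (1 / η₂
            - 2 * (s₁ : ℝ) * ∑ i ∈ Finset.univ.filter (fun i : Fin N => (i : ℕ) < s₁), lam i)
          * ((s₂ : ℝ) / η₂) :=
  dkpca_approximation_upper_bound_pos_general N s₁ s₂ hs₁pos hs₂pos hs₁N η₂ hη₂ K₁ hK₁ hK₁psd H₂ hH₂
    M hM lam hlamnonneg U hU hMU Λ₁ hΛ₁ H₁ hH₁ hMH₁
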